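/- arXiv:2006.16398 — 3 statements merged into one kernel-verified Lean document; each statement's English description precedes it below -/
import Mathlib

section
/- (Proposition 5) There is a constant C ≥ 1, depending only on φ, such that for all x > 2θ₀ one has φ(x) ≤ x φ'(x) ≤ C φ(x). Furthermore, for all x > 2θ₁ one has 2φ'(x) ≥ x φ''(x). -/
/-! `φ` is convex and `φ''(λ) = 2σ² + ∫ x² e^{-λx} ν(dx)` is nonincreasing. Since `φ(ε)` is
at most `o(1)` as `ε ↓ 0`, convexity gives `φ(x) ≤ x φ'(x)`. Unbounded variation forces `φ(λ) > 0`
for large `λ`, so by the intermediate value theorem `φ > 0`, and then `φ' > 0`, beyond the largest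
root `θ₀`. Because `φ''` decreases, the mean value theorem on `[x/2, 3x/4]` and `[3x/4, x]` yields
`φ'(x) ≤ 2 φ'(3x/4) ≤ 8 φ(x) / x`, so `C = 8` works; on `[x/2, x]` it yields
`(x/2) φ''(x) ≤ φ'(x) - φ'(x/2) ≤ φ'(x)` as soon as `φ'(x/2) ≥ 0`, i.e. for `x > 2θ₁`. -/

open MeasureTheory Real Set Filter

noncomputable section

/-- Weak lower scaling property at infinity: `f(l*x) ≥ c * l^τ * f(x)` for `l ≥ 1`, `x > x₁`. -/
def WLSC (f : ℝ → ℝ) (τ c x₁ : ℝ) : Prop :=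
  ∀ l : ℝ, 1 ≤ l → ∀ x : ℝ, x₁ < x → c * l ^ τ * f x ≤ f (l * x)

/-- Weak upper scaling property at infinity: `f(l*x) ≤ C * l^τ * f(x)` for `l ≥ 1`, `x > x₁`. -/
def WUSC (f : ℝ → ℝ) (τ C x₁ : ℝ) : Prop :=
  ∀ l : ℝ, 1 ≤ l → ∀ x : ℝ, x₁ < x → f (l * x) ≤ C * l ^ τ * f x

/-- The Pruitt function `K(r) = σ²/r² + r⁻² ∫_{(0,r)} s² ν(ds)`. -/
def pruittK (σ : ℝ) (ν : Measure ℝ) (r : ℝ) : ℝ :=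
  σ ^ 2 / r ^ 2 + (∫ s in Ioo (0:ℝ) r, s ^ 2 ∂ν) / r ^ 2

/-- The Pruitt function `h(r) = σ²/r² + ∫_{(0,∞)} min(1, s²/r²) ν(ds)`. -/
def pruittH (σ : ℝ) (ν : Measure ℝ) (r : ℝ) : ℝ :=
  σ ^ 2 / r ^ 2 + ∫ s in Ioi (0:ℝ), min 1 (s ^ 2 / r ^ 2) ∂ν

/-- The real part of the characteristic exponent:
`Re ψ(ξ) = σ²ξ² + ∫_{(0,∞)} (1 − cos(ξx)) ν(dx)`. -/
def rePsi (σ : ℝ) (ν : Measure ℝ) (ξ : ℝ) : ℝ :=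
  σ ^ 2 * ξ ^ 2 + ∫ x in Ioi (0:ℝ), (1 - Real.cos (ξ * x)) ∂ν

/-- `ψ*(r) = sup_{|z| ≤ r} Re ψ(z)`. -/
def psiStar (σ : ℝ) (ν : Measure ℝ) (r : ℝ) : ℝ :=
  sSup (rePsi σ ν '' {z : ℝ | |z| ≤ r})

/-- `ψ⁻¹(s) = sup{r > 0 : ψ*(r) = s}`. -/
def psiInv (σ : ℝ) (ν : Measure ℝ) (s : ℝ) : ℝ :=
  sSup {r : ℝ | 0 < r ∧ psiStar σ ν r = s}

/-- `Φ(x) = x² φ''(x)`. -/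
def bigPhi (φ'' : ℝ → ℝ) (x : ℝ) : ℝ := x ^ 2 * φ'' x

/-- `Φ*(r) = sup_{0 < s ≤ r} Φ(s)`. -/
def bigPhiStar (φ'' : ℝ → ℝ) (r : ℝ) : ℝ := sSup (bigPhi φ'' '' Ioc (0:ℝ) r)

/-- `Φ⁻¹(s) = sup{r > 0 : Φ*(r) = s}`. -/
def bigPhiInv (φ'' : ℝ → ℝ) (s : ℝ) : ℝ := sSup {r : ℝ | 0 < r ∧ bigPhiStar φ'' r = s}

/-- The characteristic (Lévy–Khintchine) exponent
`ψ(ξ) = σ²ξ² − ibξ − ∫_{(0,∞)} (e^{iξx} − 1 − iξx 1_{x<1}) ν(dx)`. -/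
def charExp (σ b : ℝ) (ν : Measure ℝ) (ξ : ℝ) : ℂ :=
  (σ : ℂ) ^ 2 * (ξ : ℂ) ^ 2 - Complex.I * (b : ℂ) * (ξ : ℂ) -
    ∫ x in Ioi (0:ℝ), (Complex.exp (Complex.I * (ξ : ℂ) * (x : ℂ)) - 1 -
      Complex.I * (ξ : ℂ) * (x : ℂ) * (if x < 1 then (1:ℂ) else 0)) ∂ν

/-- The holomorphic extension of the Laplace exponent to `{Re z > 0}`. -/
def laplaceC (σ b : ℝ) (ν : Measure ℝ) (z : ℂ) : ℂ :=
  (σ : ℂ) ^ 2 * z ^ 2 - (b : ℂ) * z +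
    ∫ x in Ioi (0:ℝ), (Complex.exp (-(z * (x : ℂ))) - 1 +
      z * (x : ℂ) * (if x < 1 then (1:ℂ) else 0)) ∂ν

/-- `b_r = b + ∫_{(0,∞)} s (1_{s<r} − 1_{s<1}) ν(ds)`. -/
def brFn (b : ℝ) (ν : Measure ℝ) (r : ℝ) : ℝ :=
  b + ∫ s in Ioi (0:ℝ), s * ((if s < r then (1:ℝ) else 0) - (if s < 1 then (1:ℝ) else 0)) ∂ν

/-- The majorant `η`: `η(0) = ∞`, `η(s) = s⁻¹ Φ*(1/s)` for `0 < s < 1/x₀`,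
and `η(s) = A s⁻¹ |φ(1/s)|` for `s ≥ 1/x₀`, where `A = Φ*(x₀)/|φ(x₀)|`. -/
def etaFn (φ φ'' : ℝ → ℝ) (x₀ : ℝ) (s : ℝ) : ENNReal :=
  if s ≤ 0 then ⊤
  else if x₀ * s < 1 then ENNReal.ofReal (s⁻¹ * bigPhiStar φ'' s⁻¹)
  else ENNReal.ofReal ((bigPhiStar φ'' x₀ / |φ x₀|) * s⁻¹ * |φ s⁻¹|)

open scoped Topology ENNReal

lemma exp_neg_sub_one_add_nonneg (u : ℝ) : 0 ≤ exp (-u) - 1 + u := by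
  linarith [add_one_le_exp (-u)]

lemma exp_neg_sub_one_add_le_sq {u : ℝ} (hu : 0 ≤ u) : exp (-u) - 1 + u ≤ u ^ 2 := by
  have h1 : (0 : ℝ) < 1 + u := by linarith
  have h2 : exp (-u) ≤ (1 + u)⁻¹ := by
    rw [exp_neg]
    exact inv_anti₀ h1 (by linarith [add_one_le_exp u])
  have h3 : (1 + u)⁻¹ ≤ 1 - u + u ^ 2 := by
    rw [inv_le_iff_one_le_mul₀' h1]; nlinarith
  linarith

lemma half_le_exp_neg_sub_one_add {u : ℝ} (hu : 2 ≤ u) : u / 2 ≤ exp (-u) - 1 + u := by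
  linarith [exp_pos (-u)]

lemma sq_mul_exp_neg_le_two {u : ℝ} (hu : 0 ≤ u) : u ^ 2 * exp (-u) ≤ 2 := by
  rw [exp_neg, mul_inv_le_iff₀ (exp_pos u)]
  nlinarith [quadratic_le_exp_of_nonneg hu]

def laplaceIntegrand (l x : ℝ) : ℝ := exp (-(l * x)) - 1 + l * x * (if x < 1 then 1 else 0)

def laplaceExponent (σ b : ℝ) (ν : Measure ℝ) (l : ℝ) : ℝ :=
  σ ^ 2 * l ^ 2 - b * l + ∫ x in Ioi 0, laplaceIntegrand l x ∂ν

section LaplaceIntegrand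

variable {l x : ℝ}

lemma measurable_laplaceIntegrand (l : ℝ) : Measurable (laplaceIntegrand l) :=
  (by fun_prop : Measurable fun x : ℝ => exp (-(l * x)) - 1).add
    ((measurable_const.mul measurable_id).mul
      (measurable_const.ite measurableSet_Iio measurable_const))

lemma laplaceIntegrand_le_mul_min_one_sq (hl : 0 ≤ l) (hx : 0 < x) :
    laplaceIntegrand l x ≤ l ^ 2 * min 1 (x ^ 2) := by
  unfold laplaceIntegrand
  rcases lt_or_ge x 1 with hx1 | hx1
  · rw [if_pos hx1, mul_one, min_eq_right (by nlinarith)]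
    nlinarith [exp_neg_sub_one_add_le_sq (mul_nonneg hl hx.le)]
  · rw [if_neg (not_lt.2 hx1), mul_zero, add_zero, min_eq_left (by nlinarith)]
    nlinarith [exp_le_one_iff.2 (neg_nonpos.2 (mul_nonneg hl hx.le))]

lemma neg_min_one_sq_le_laplaceIntegrand (l x : ℝ) :
    -min 1 (x ^ 2) ≤ laplaceIntegrand l x := by
  unfold laplaceIntegrand
  rcases lt_or_ge x 1 with hx1 | hx1
  · rw [if_pos hx1, mul_one]
    linarith [exp_neg_sub_one_add_nonneg (l * x), le_min zero_le_one (sq_nonneg x)]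
  · rw [if_neg (not_lt.2 hx1), mul_zero, add_zero, min_eq_left (by nlinarith)]
    linarith [exp_pos (-(l * x))]

lemma half_mul_le_laplaceIntegrand {r : ℝ} (hr : 0 < r) (hlr : 2 ≤ l * r) (hx : x ∈ Ioo r 1) :
    l / 2 * x ≤ laplaceIntegrand l x := by
  unfold laplaceIntegrand
  rw [if_pos hx.2, mul_one]
  have hl : 0 ≤ l := by nlinarith
  have := half_le_exp_neg_sub_one_add (u := l * x) (by nlinarith [hx.1])
  linarith

end LaplaceIntegrand

section LevyMeasure

variable {ν : Measure ℝ}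

lemma integrableOn_min_one_sq
    (hint : ∫⁻ x in Ioi 0, ENNReal.ofReal (min 1 (x ^ 2)) ∂ν ≠ ⊤) :
    IntegrableOn (fun x => min 1 (x ^ 2)) (Ioi 0) ν := by
  refine ⟨(by fun_prop : Measurable fun x : ℝ => min 1 (x ^ 2)).aestronglyMeasurable, ?_⟩
  rw [hasFiniteIntegral_iff_ofReal (ae_of_all _ fun x => le_min zero_le_one (sq_nonneg x))]
  exact hint.lt_top

variable (hν : IntegrableOn (fun x => min 1 (x ^ 2)) (Ioi 0) ν)
include hν

lemma integrableOn_of_abs_le_mul_min_one_sq {g : ℝ → ℝ} (hg : Measurable g) (K : ℝ)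
    (hgK : ∀ x, 0 < x → |g x| ≤ K * min 1 (x ^ 2)) : IntegrableOn g (Ioi 0) ν :=
  (hν.const_mul K).mono' hg.aestronglyMeasurable
    ((ae_restrict_iff' measurableSet_Ioi).2 (ae_of_all _ hgK))

lemma integrableOn_laplaceIntegrand {l : ℝ} (hl : 0 ≤ l) :
    IntegrableOn (laplaceIntegrand l) (Ioi 0) ν := by
  refine integrableOn_of_abs_le_mul_min_one_sq hν (measurable_laplaceIntegrand l) (max (l ^ 2) 1)
    fun x hx => abs_le.2 ⟨?_, ?_⟩
  · nlinarith [neg_min_one_sq_le_laplaceIntegrand l x, le_max_right (l ^ 2) 1,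
      le_min zero_le_one (sq_nonneg x)]
  · nlinarith [laplaceIntegrand_le_mul_min_one_sq hl hx, le_max_left (l ^ 2) 1,
      le_min zero_le_one (sq_nonneg x)]

lemma integrableOn_sq_mul_exp_neg {l : ℝ} (hl : 0 < l) :
    IntegrableOn (fun x => x ^ 2 * exp (-(l * x))) (Ioi 0) ν := by
  refine integrableOn_of_abs_le_mul_min_one_sq hν (by fun_prop) (max 1 (2 / l ^ 2))
    fun x hx => ?_
  rw [abs_of_nonneg (by positivity)]
  rcases le_total x 1 with hx1 | hx1
  · rw [min_eq_right (by nlinarith)]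
    have : exp (-(l * x)) ≤ 1 := exp_le_one_iff.2 (by nlinarith)
    nlinarith [le_max_left 1 (2 / l ^ 2), exp_pos (-(l * x))]
  · rw [min_eq_left (by nlinarith), mul_one]
    refine le_trans ?_ (le_max_right _ _)
    rw [le_div_iff₀ (by positivity)]
    linarith [sq_mul_exp_neg_le_two (mul_nonneg hl.le hx.le), show x ^ 2 * exp (-(l * x)) * l ^ 2
      = (l * x) ^ 2 * exp (-(l * x)) by ring]

lemma antitoneOn_integral_sq_mul_exp_neg :
    AntitoneOn (fun l => ∫ x in Ioi 0, x ^ 2 * exp (-(l * x)) ∂ν) (Ioi 0) := by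
  intro a ha c hc hac
  refine setIntegral_mono_on (integrableOn_sq_mul_exp_neg hν hc)
    (integrableOn_sq_mul_exp_neg hν ha) measurableSet_Ioi fun x (hx : 0 < x) => ?_
  gcongr

lemma integral_laplaceIntegrand_le {l : ℝ} (hl : 0 ≤ l) :
    ∫ x in Ioi 0, laplaceIntegrand l x ∂ν ≤ l ^ 2 * ∫ x in Ioi 0, min 1 (x ^ 2) ∂ν := by
  rw [← integral_const_mul]
  exact setIntegral_mono_on (integrableOn_laplaceIntegrand hν hl) (hν.const_mul _)
    measurableSet_Ioi fun x hx => laplaceIntegrand_le_mul_min_one_sq hl hx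

lemma neg_integral_min_one_sq_le {l : ℝ} (hl : 0 ≤ l) :
    -∫ x in Ioi 0, min 1 (x ^ 2) ∂ν ≤ ∫ x in Ioi 0, laplaceIntegrand l x ∂ν := by
  rw [← integral_neg]
  exact setIntegral_mono_on hν.neg (integrableOn_laplaceIntegrand hν hl)
    measurableSet_Ioi fun x _ => neg_min_one_sq_le_laplaceIntegrand l x

lemma ofReal_mul_setLIntegral_le_integral_laplaceIntegrand_add {l r : ℝ} (hr : 0 < r)
    (hlr : 2 ≤ l * r) :
    ENNReal.ofReal (l / 2) * ∫⁻ x in Ioo r 1, ENNReal.ofReal x ∂ν ≤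
      ENNReal.ofReal
        (∫ x in Ioi 0, laplaceIntegrand l x ∂ν + ∫ x in Ioi 0, min 1 (x ^ 2) ∂ν) := by
  have hl : 0 ≤ l := by nlinarith
  have hsum : IntegrableOn (fun x => laplaceIntegrand l x + min 1 (x ^ 2)) (Ioi 0) ν :=
    (integrableOn_laplaceIntegrand hν hl).add hν
  have hsum_nonneg : ∀ x, 0 ≤ laplaceIntegrand l x + min 1 (x ^ 2) := fun x => by
    linarith [neg_min_one_sq_le_laplaceIntegrand l x]
  rw [← integral_add (integrableOn_laplaceIntegrand hν hl) hν,
    ofReal_integral_eq_lintegral_ofReal hsum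
      (ae_of_all _ hsum_nonneg)]
  calc ENNReal.ofReal (l / 2) * ∫⁻ x in Ioo r 1, ENNReal.ofReal x ∂ν
      = ∫⁻ x in Ioo r 1, ENNReal.ofReal (l / 2 * x) ∂ν := by
        rw [← lintegral_const_mul _ (by fun_prop)]
        exact setLIntegral_congr_fun measurableSet_Ioo fun x _ =>
          (ENNReal.ofReal_mul (by positivity)).symm
    _ ≤ ∫⁻ x in Ioo r 1, ENNReal.ofReal (laplaceIntegrand l x + min 1 (x ^ 2)) ∂ν :=
        setLIntegral_mono' measurableSet_Ioo fun x hx => ENNReal.ofReal_le_ofReal <| by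
          linarith [half_mul_le_laplaceIntegrand hr hlr hx, le_min zero_le_one (sq_nonneg x)]
    _ ≤ ∫⁻ x in Ioi 0, ENNReal.ofReal (laplaceIntegrand l x + min 1 (x ^ 2)) ∂ν :=
        lintegral_mono_set fun x hx => hr.trans hx.1

omit hν in
lemma exists_lt_setLIntegral_Ioo (h : ∫⁻ x in Ioo 0 1, ENNReal.ofReal x ∂ν = ⊤) (T : ℝ) :
    ∃ r, 0 < r ∧ ENNReal.ofReal T < ∫⁻ x in Ioo r 1, ENNReal.ofReal x ∂ν := by
  have hunion : ⋃ n : ℕ, Ioo (1 / ((n : ℝ) + 1)) 1 = Ioo 0 1 := by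
    ext x
    simp only [mem_iUnion, mem_Ioo]
    constructor
    · rintro ⟨n, hn, hx1⟩
      exact ⟨lt_trans (by positivity) hn, hx1⟩
    · rintro ⟨hx0, hx1⟩
      obtain ⟨n, hn⟩ := exists_nat_one_div_lt hx0
      exact ⟨n, hn, hx1⟩
  have hmono : Monotone fun n : ℕ => Ioo (1 / ((n : ℝ) + 1)) 1 := fun m n hmn =>
    Ioo_subset_Ioo_left (one_div_le_one_div_of_le (by positivity) (by gcongr))
  rw [← hunion, setLIntegral_iUnion_of_directed _ hmono.directed_le] at h
  obtain ⟨n, hn⟩ := lt_iSup_iff.1 (h ▸ ENNReal.ofReal_lt_top : ENNReal.ofReal T < _)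
  exact ⟨_, by positivity, hn⟩

variable {σ b : ℝ}

lemma eventually_laplaceExponent_le {δ : ℝ} (hδ : 0 < δ) :
    ∀ᶠ l in 𝓝[>] 0, laplaceExponent σ b ν l ≤ δ := by
  set M := ∫ x in Ioi 0, min 1 (x ^ 2) ∂ν
  have hbound : Tendsto (fun l => σ ^ 2 * l ^ 2 - b * l + l ^ 2 * M) (𝓝 0) (𝓝 0) := by
    simpa using
      (by fun_prop : Continuous fun l : ℝ => σ ^ 2 * l ^ 2 - b * l + l ^ 2 * M).tendsto 0
  filter_upwards [self_mem_nhdsWithin,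
    nhdsWithin_le_nhds (hbound.eventually (gt_mem_nhds hδ))] with l (hl : 0 < l) hlδ
  linarith [integral_laplaceIntegrand_le hν hl.le, show laplaceExponent σ b ν l
    = σ ^ 2 * l ^ 2 - b * l + ∫ x in Ioi 0, laplaceIntegrand l x ∂ν from rfl]

lemma eventually_laplaceExponent_pos
    (hUV : 0 < σ ∨ ∫⁻ x in Ioo 0 1, ENNReal.ofReal x ∂ν = ⊤) :
    ∀ᶠ l in atTop, 0 < laplaceExponent σ b ν l := by
  set M := ∫ x in Ioi 0, min 1 (x ^ 2) ∂ν
  have hM : 0 ≤ M :=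
    setIntegral_nonneg measurableSet_Ioi fun x _ => le_min zero_le_one (sq_nonneg x)
  have hbl : ∀ l, 0 ≤ l → b * l ≤ |b| * l := fun l hl =>
    mul_le_mul_of_nonneg_right (le_abs_self b) hl
  rcases hUV with hσ | hinf
  · filter_upwards [eventually_ge_atTop 1, eventually_ge_atTop ((|b| + M + 1) / σ ^ 2)]
      with l hl1 hlσ
    have hσl : |b| + M + 1 ≤ σ ^ 2 * l := by
      rwa [div_le_iff₀ (by positivity), mul_comm] at hlσ
    unfold laplaceExponent
    nlinarith [neg_integral_min_one_sq_le hν (l := l) (by linarith), hbl l (by linarith)]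
  · -- the small jumps contribute `≥ (l / 2) ∫_{(r,1)} x ν(dx)`, which beats `l (|b| + M + 1)`
    obtain ⟨r, hr, hT⟩ := exists_lt_setLIntegral_Ioo hinf (2 * (|b| + M + 1))
    filter_upwards [eventually_ge_atTop 1, eventually_ge_atTop (2 / r)] with l hl1 hlr
    have hlr' : 2 ≤ l * r := by rwa [div_le_iff₀ hr] at hlr
    have hlower := neg_integral_min_one_sq_le hν (l := l) (by linarith)
    have hmoment :
        l / 2 * (2 * (|b| + M + 1)) ≤ ∫ x in Ioi 0, laplaceIntegrand l x ∂ν + M := by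
      rw [← ENNReal.ofReal_le_ofReal_iff (by linarith), ENNReal.ofReal_mul (by linarith)]
      exact (mul_le_mul_right hT.le _).trans
        (ofReal_mul_setLIntegral_le_integral_laplaceIntegrand_add hν hr hlr')
    unfold laplaceExponent
    nlinarith [hbl l (by linarith)]

end LevyMeasure

section Convexity

variable {f f' f'' : ℝ → ℝ}

lemma monotoneOn_Ioi_of_hasDerivAt_nonneg (hf : ∀ x, 0 < x → HasDerivAt f (f' x) x)
    (hf' : ∀ x, 0 < x → 0 ≤ f' x) : MonotoneOn f (Ioi 0) :=
  monotoneOn_of_hasDerivWithinAt_nonneg (convex_Ioi 0)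
    (fun x hx => (hf x hx).continuousAt.continuousWithinAt)
    (fun x hx => (hf x (interior_subset hx)).hasDerivWithinAt)
    fun x hx => hf' x (interior_subset hx)

lemma mul_sub_le_sub_le_mul_sub_of_monotoneOn (hf : ∀ x, 0 < x → HasDerivAt f (f' x) x)
    (hf' : MonotoneOn f' (Ioi 0)) {a c : ℝ} (ha : 0 < a) (hac : a ≤ c) :
    f' a * (c - a) ≤ f c - f a ∧ f c - f a ≤ f' c * (c - a) := by
  rcases hac.eq_or_lt with rfl | hac
  · simp
  obtain ⟨ξ, ⟨haξ, hξc⟩, hξ⟩ := exists_hasDerivAt_eq_slope f f' hac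
    (fun x hx => (hf x (ha.trans_le hx.1)).continuousAt.continuousWithinAt)
    (fun x hx => hf x (ha.trans hx.1))
  have hslope : f c - f a = f' ξ * (c - a) := by
    rw [hξ, div_mul_cancel₀ _ (sub_ne_zero.2 hac.ne')]
  have hca : 0 ≤ c - a := by linarith
  rw [hslope]
  exact ⟨mul_le_mul_of_nonneg_right (hf' ha (ha.trans haξ) haξ.le) hca,
    mul_le_mul_of_nonneg_right (hf' (ha.trans haξ) (ha.trans hac) hξc.le) hca⟩

lemma mul_sub_le_sub_le_mul_sub_of_antitoneOn (hf : ∀ x, 0 < x → HasDerivAt f (f' x) x)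
    (hf' : AntitoneOn f' (Ioi 0)) {a c : ℝ} (ha : 0 < a) (hac : a ≤ c) :
    f' c * (c - a) ≤ f c - f a ∧ f c - f a ≤ f' a * (c - a) := by
  have := mul_sub_le_sub_le_mul_sub_of_monotoneOn (f := -f) (f' := -f')
    (fun x hx => (hf x hx).neg) (fun x hx y hy hxy => neg_le_neg (hf' hx hy hxy)) ha hac
  simp only [Pi.neg_apply] at this
  constructor <;> linarith [this.1, this.2]

lemma le_mul_deriv_of_monotoneOn (hf : ∀ x, 0 < x → HasDerivAt f (f' x) x)
    (hf' : MonotoneOn f' (Ioi 0)) (hsmall : ∀ δ > 0, ∀ᶠ ε in 𝓝[>] 0, f ε ≤ δ)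
    {x : ℝ} (hx : 0 < x) : f x ≤ x * f' x := by
  refine le_of_forall_pos_le_add fun δ hδ => ?_
  have hlin : ∀ᶠ ε in 𝓝[>] 0, -(δ / 2) < ε * f' x := by
    have : Tendsto (fun ε => ε * f' x) (𝓝[>] 0) (𝓝 0) :=
      ((continuous_id.mul continuous_const).tendsto' 0 0 (by simp)).mono_left nhdsWithin_le_nhds
    exact this.eventually (lt_mem_nhds (by linarith))
  have hIoo : ∀ᶠ ε in 𝓝[>] 0, ε ∈ Ioo 0 x := Ioo_mem_nhdsGT hx
  obtain ⟨ε, ⟨hε0, hεx⟩, hεf, hεlin⟩ :=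
    (hIoo.and ((hsmall (δ / 2) (by linarith)).and hlin)).exists
  have := (mul_sub_le_sub_le_mul_sub_of_monotoneOn hf hf' hε0 hεx.le).2
  nlinarith

lemma mul_deriv_le_eight_mul (hf : ∀ x, 0 < x → HasDerivAt f (f' x) x)
    (hf' : ∀ x, 0 < x → HasDerivAt f' (f'' x) x) (hmono : MonotoneOn f' (Ioi 0))
    (hanti : AntitoneOn f'' (Ioi 0)) {x : ℝ} (hx : 0 < x) (hf'x : 0 ≤ f' (x / 2))
    (hfx : 0 ≤ f (3 * x / 4)) : x * f' x ≤ 8 * f x := by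
  have h1 := (mul_sub_le_sub_le_mul_sub_of_antitoneOn hf' hanti (a := 3 * x / 4) (c := x)
    (by linarith) (by linarith)).2
  have h2 := (mul_sub_le_sub_le_mul_sub_of_antitoneOn hf' hanti (a := x / 2) (c := 3 * x / 4)
    (by linarith) (by linarith)).1
  have h3 := (mul_sub_le_sub_le_mul_sub_of_monotoneOn hf hmono (a := 3 * x / 4) (c := x)
    (by linarith) (by linarith)).1
  have hdouble : f' x ≤ 2 * f' (3 * x / 4) := by nlinarith
  nlinarith

lemma mul_deriv_le_two_mul (hf' : ∀ x, 0 < x → HasDerivAt f' (f'' x) x)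
    (hanti : AntitoneOn f'' (Ioi 0)) {x : ℝ} (hx : 0 < x) (hf'x : 0 ≤ f' (x / 2)) :
    x * f'' x ≤ 2 * f' x := by
  have := (mul_sub_le_sub_le_mul_sub_of_antitoneOn hf' hanti (a := x / 2) (c := x)
    (by linarith) (by linarith)).1
  nlinarith

lemma pos_of_isGreatest_zeros (hf : ContinuousOn f (Ioi 0))
    {θ : ℝ} (hθ : IsGreatest {s | 0 ≤ s ∧ f s = 0} θ) (hev : ∀ᶠ l in atTop, 0 < f l)
    {s : ℝ} (hs : θ < s) : 0 < f s := by
  have hs0 : 0 < s := hθ.1.1.trans_lt hs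
  by_contra! hneg
  obtain ⟨l, hl, hsl⟩ := (hev.and (eventually_ge_atTop s)).exists
  obtain ⟨c, hc, hc0⟩ := intermediate_value_Icc hsl (hf.mono fun y hy => hs0.trans_le hy.1)
    ⟨hneg, hl.le⟩
  linarith [hθ.2 ⟨hs0.le.trans hc.1, hc0⟩, hc.1]

end Convexity

theorem statement1_general
    (ν : Measure ℝ)
    (hint : ∫⁻ x in Ioi (0:ℝ), ENNReal.ofReal (min 1 (x ^ 2)) ∂ν ≠ ⊤)
    (σ b : ℝ)
    (φ φ' φ'' : ℝ → ℝ)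
    (hφ : ∀ l : ℝ, 0 ≤ l → φ l = σ ^ 2 * l ^ 2 - b * l +
      ∫ x in Ioi (0:ℝ), (Real.exp (-(l * x)) - 1 + l * x * (if x < 1 then 1 else 0)) ∂ν)
    (hD1 : ∀ x : ℝ, 0 < x → HasDerivAt φ (φ' x) x)
    (hD2 : ∀ x : ℝ, 0 < x → HasDerivAt φ' (φ'' x) x)
    (hφ'' : ∀ l : ℝ, 0 < l → φ'' l = 2 * σ ^ 2 + ∫ x in Ioi (0:ℝ), x ^ 2 * Real.exp (-(l * x)) ∂ν)
    (hUV : 0 < σ ∨ ∫⁻ x in Ioo (0:ℝ) 1, ENNReal.ofReal x ∂ν = ⊤)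
    (θ₀ θ₁ : ℝ)
    (hθ₀ : IsGreatest {s : ℝ | 0 ≤ s ∧ φ s = 0} θ₀)
    (hθ₁ : θ₁ = sInf {s : ℝ | 0 < s ∧ 0 < φ' s})
    :
    ∃ C : ℝ, 1 ≤ C ∧
      (∀ x : ℝ, 2 * θ₀ < x → φ x ≤ x * φ' x ∧ x * φ' x ≤ C * φ x) ∧
      (∀ x : ℝ, 2 * θ₁ < x → x * φ'' x ≤ 2 * φ' x) := by
  have hν := integrableOn_min_one_sq hint
  have hφL : ∀ l, 0 ≤ l → φ l = laplaceExponent σ b ν l := hφ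
  have hanti : AntitoneOn φ'' (Ioi 0) := fun a ha c hc hac => by
    rw [hφ'' a ha, hφ'' c hc]
    linarith [antitoneOn_integral_sq_mul_exp_neg hν ha hc hac]
  have hmono : MonotoneOn φ' (Ioi 0) := monotoneOn_Ioi_of_hasDerivAt_nonneg hD2 fun x hx => by
    rw [hφ'' x hx]
    have : 0 ≤ ∫ y in Ioi 0, y ^ 2 * exp (-(x * y)) ∂ν :=
      setIntegral_nonneg measurableSet_Ioi fun y _ => by positivity
    positivity
  have hsmall : ∀ δ > 0, ∀ᶠ ε in 𝓝[>] 0, φ ε ≤ δ := fun δ hδ => by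
    filter_upwards [self_mem_nhdsWithin, eventually_laplaceExponent_le hν hδ] with ε hε hεδ
    rwa [hφL ε hε.le]
  have hlarge : ∀ᶠ l in atTop, 0 < φ l := by
    filter_upwards [eventually_laplaceExponent_pos hν hUV, eventually_ge_atTop 0] with l hl hl0
    rwa [hφL l hl0]
  have hpos : ∀ s, θ₀ < s → 0 < φ s := fun s hs =>
    pos_of_isGreatest_zeros (fun x hx => (hD1 x hx).continuousAt.continuousWithinAt) hθ₀
      hlarge hs
  have hle : ∀ x, 0 < x → φ x ≤ x * φ' x := fun x hx =>
    le_mul_deriv_of_monotoneOn hD1 hmono hsmall hx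
  have hθ₀0 : 0 ≤ θ₀ := hθ₀.1.1
  have hderiv_pos : ∀ s, θ₀ < s → 0 < φ' s := fun s hs =>
    have hs0 : 0 < s := hθ₀0.trans_lt hs
    pos_of_mul_pos_right ((hpos s hs).trans_le (hle s hs0)) hs0.le
  refine ⟨8, by norm_num, fun x hx => ⟨hle x (by linarith), ?_⟩, fun x hx => ?_⟩
  · exact mul_deriv_le_eight_mul hD1 hD2 hmono hanti (by linarith)
      (hderiv_pos _ (by linarith)).le (hpos _ (by linarith)).le
  · obtain ⟨t, ⟨ht0, ht⟩, htx⟩ : ∃ t ∈ {s : ℝ | 0 < s ∧ 0 < φ' s}, t < x / 2 :=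
      exists_lt_of_csInf_lt ⟨θ₀ + 1, by linarith, hderiv_pos _ (by linarith)⟩
        (by rw [← hθ₁]; linarith)
    exact mul_deriv_le_two_mul hD2 hanti (by linarith)
      (ht.trans_le (hmono ht0 (ht0.trans htx) htx.le)).le

/-- Proposition 5. -/
theorem statement1
    (ν : Measure ℝ) [SigmaFinite ν]
    (hint : ∫⁻ x in Ioi (0:ℝ), ENNReal.ofReal (min 1 (x ^ 2)) ∂ν ≠ ⊤)
    (σ b : ℝ) (hσ : 0 ≤ σ)
    (φ φ' φ'' : ℝ → ℝ)
    (hφ : ∀ l : ℝ, 0 ≤ l → φ l = σ ^ 2 * l ^ 2 - b * l +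
      ∫ x in Ioi (0:ℝ), (Real.exp (-(l * x)) - 1 + l * x * (if x < 1 then 1 else 0)) ∂ν)
    (hD1 : ∀ x : ℝ, 0 < x → HasDerivAt φ (φ' x) x)
    (hD2 : ∀ x : ℝ, 0 < x → HasDerivAt φ' (φ'' x) x)
    (hφ'' : ∀ l : ℝ, 0 < l → φ'' l = 2 * σ ^ 2 + ∫ x in Ioi (0:ℝ), x ^ 2 * Real.exp (-(l * x)) ∂ν)
    (hUV : 0 < σ ∨ ∫⁻ x in Ioo (0:ℝ) 1, ENNReal.ofReal x ∂ν = ⊤)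
    (θ₀ θ₁ : ℝ)
    (hθ₀ : IsGreatest {s : ℝ | 0 ≤ s ∧ φ s = 0} θ₀)
    (hθ₁ : θ₁ = sInf {s : ℝ | 0 < s ∧ 0 < φ' s})
    :
    ∃ C : ℝ, 1 ≤ C ∧
      (∀ x : ℝ, 2 * θ₀ < x → φ x ≤ x * φ' x ∧ x * φ' x ≤ C * φ x) ∧
      (∀ x : ℝ, 2 * θ₁ < x → x * φ'' x ≤ 2 * φ' x) :=
  statement1_general ν hint σ b φ φ' φ'' hφ hD1 hD2 hφ'' hUV θ₀ θ₁ hθ₀ hθ₁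
end
end

section
/- (Corollary 3) There is a constant c > 0, depending only on θ₀, such that for all x ∈ (0, θ₀/2) ∪ (2θ₀, ∞) one has |φ(x)| ≥ c x² φ''(x). -/
open MeasureTheory Real Set Filter

noncomputable section

open Topology

/-!
On `(0, ∞)` the exponent `φ` is convex with `φ''` nonincreasing, so Taylor's formula around `x`
at the points `x / 2` and `3x / 2` bounds `x² φ''(x)` by a multiple of `φ` there. Where `φ ≤ 0` at
both points this gives `x² φ''(x) ≤ 16 |φ(x)|`; where `φ(x/2) ≥ 0` the tangent inequality
`φ(t) ≤ t φ'(t)` (from `φ(0+) ≤ 0`) makes `φ'(x/2) ≥ 0` and one expansion gives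
`x² φ''(x) ≤ 8 φ(x)`. The sign conditions hold on the two ranges: below `θ₀` convexity and the
root at `θ₀` force `φ ≤ 0`, and above `θ₀` the continuous function `φ` has no zero, hence has a
constant sign.
-/

theorem ConvexOn.add_mul_sub_le_of_hasDerivAt {S : Set ℝ} {f : ℝ → ℝ} {f' x y : ℝ}
    (hfc : ConvexOn ℝ S f) (hx : x ∈ S) (hy : y ∈ S) (hf : HasDerivAt f f' x) :
    f x + f' * (y - x) ≤ f y := by
  rcases lt_trichotomy x y with hxy | rfl | hyx
  · have h := hfc.le_slope_of_hasDerivAt hx hy hxy hf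
    rw [slope_def_field, le_div_iff₀ (sub_pos.2 hxy)] at h
    linarith
  · simp
  · have h := hfc.slope_le_of_hasDerivAt hy hx hyx hf
    rw [slope_def_field, div_le_iff₀ (sub_pos.2 hyx)] at h
    linarith

theorem ConvexOn.le_mul_of_hasDerivAt_of_le_tendsto {f g : ℝ → ℝ} (hfc : ConvexOn ℝ (Ioi 0) f)
    (hg : Tendsto g (𝓝[>] 0) (𝓝 0)) (hfg : ∀ᶠ s in 𝓝[>] 0, f s ≤ g s) {t f't : ℝ} (ht : 0 < t)
    (hf : HasDerivAt f f't t) : f t ≤ t * f't := by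
  have hline : Tendsto (fun s => f t + f't * (s - t)) (𝓝[>] 0) (𝓝 (f t + f't * (0 - t))) :=
    ((by fun_prop : Continuous fun s => f t + f't * (s - t)).tendsto 0).mono_left
      nhdsWithin_le_nhds
  have hle : ∀ᶠ s in 𝓝[>] 0, f t + f't * (s - t) ≤ g s := by
    filter_upwards [hfg, self_mem_nhdsWithin] with s hs hs0
    exact (hfc.add_mul_sub_le_of_hasDerivAt ht hs0 hf).trans hs
  linarith [le_of_tendsto_of_tendsto hline hg hle]

theorem ConvexOn.nonpos_of_lt_of_eq_zero {f : ℝ → ℝ} (hfc : ConvexOn ℝ (Ioi 0) f) {t θ f't : ℝ}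
    (hf : HasDerivAt f f't t) (htan : f t ≤ t * f't) (ht : 0 < t) (htθ : t < θ) (hθ : f θ = 0) :
    f t ≤ 0 := by
  have h := hfc.add_mul_sub_le_of_hasDerivAt ht (ht.trans htθ) hf
  by_contra! hpos
  have hf't : 0 < f't := pos_of_mul_pos_right (hpos.trans_le htan) ht.le
  nlinarith [mul_pos hf't (sub_pos.2 htθ)]

theorem IsPreconnected.forall_pos_or_forall_neg {s : Set ℝ} {f : ℝ → ℝ} (hs : IsPreconnected s)
    (hf : ContinuousOn f s) (hf0 : ∀ x ∈ s, f x ≠ 0) :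
    (∀ x ∈ s, 0 < f x) ∨ (∀ x ∈ s, f x < 0) := by
  by_contra! h
  obtain ⟨⟨a, ha, hfa⟩, ⟨b, hb, hfb⟩⟩ := h
  obtain ⟨z, hz, hfz⟩ := hs.intermediate_value ha hb hf ⟨hfa, hfb⟩
  exact hf0 z hz hfz

section DerivativesOnIoi

variable {f f' f'' : ℝ → ℝ}

theorem convexOn_Ioi_of_deriv2_nonneg
    (hf : ∀ x, 0 < x → HasDerivAt f (f' x) x) (hf' : ∀ x, 0 < x → HasDerivAt f' (f'' x) x)
    (hf''₀ : ∀ x, 0 < x → 0 ≤ f'' x) : ConvexOn ℝ (Ioi 0) f :=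
  convexOn_of_hasDerivWithinAt2_nonneg (convex_Ioi 0)
    (fun y hy => (hf y hy).continuousAt.continuousWithinAt)
    (fun y hy => by rw [interior_Ioi] at hy ⊢; exact (hf y hy).hasDerivWithinAt)
    (fun y hy => by rw [interior_Ioi] at hy ⊢; exact (hf' y hy).hasDerivWithinAt)
    (fun y hy => by rw [interior_Ioi] at hy; exact hf''₀ y hy)

theorem add_deriv_mul_sub_add_sq_le_of_antitoneOn
    (hf : ∀ x, 0 < x → HasDerivAt f (f' x) x) (hf' : ∀ x, 0 < x → HasDerivAt f' (f'' x) x)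
    (hanti : AntitoneOn f'' (Ioi 0)) {u v : ℝ} (hu : 0 < u) (hv : 0 < v) :
    f v + f' v * (u - v) + f'' (max u v) / 2 * (u - v) ^ 2 ≤ f u := by
  set m := max u v
  set c := f'' m
  have hm : 0 < m := lt_max_of_lt_left hu
  have hg : ∀ y, 0 < y → HasDerivAt (fun y => f y - c / 2 * y ^ 2) (f' y - c * y) y :=
    fun y hy => ((hf y hy).fun_sub ((hasDerivAt_pow 2 y).const_mul (c / 2))).congr_deriv
      (by norm_num; ring)
  have hg' : ∀ y, 0 < y → HasDerivAt (fun y => f' y - c * y) (f'' y - c) y := by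
    intro y hy
    simpa using (hf' y hy).fun_sub ((hasDerivAt_id y).const_mul c)
  have hconv : ConvexOn ℝ (Ioc 0 m) (fun y => f y - c / 2 * y ^ 2) := by
    refine convexOn_of_hasDerivWithinAt2_nonneg (convex_Ioc 0 m) (f' := fun y => f' y - c * y)
      (f'' := fun y => f'' y - c)
      (fun y hy => (hg y hy.1).continuousAt.continuousWithinAt) (fun y hy => ?_) (fun y hy => ?_)
      (fun y hy => ?_) <;> rw [interior_Ioc] at hy
    · exact (hg y hy.1).hasDerivWithinAt
    · exact (hg' y hy.1).hasDerivWithinAt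
    · exact sub_nonneg.2 (hanti hy.1 hm hy.2.le)
  have h := hconv.add_mul_sub_le_of_hasDerivAt ⟨hv, le_max_right u v⟩ ⟨hu, le_max_left u v⟩
    (hg v hv)
  linear_combination h

theorem sq_mul_deriv2_div_sixteen_le_neg
    (hf : ∀ x, 0 < x → HasDerivAt f (f' x) x) (hf' : ∀ x, 0 < x → HasDerivAt f' (f'' x) x)
    (hanti : AntitoneOn f'' (Ioi 0)) (hf''₀ : ∀ x, 0 < x → 0 ≤ f'' x) {x : ℝ} (hx : 0 < x)
    (hleft : f (x / 2) ≤ 0) (hright : f (3 * x / 2) ≤ 0) :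
    x ^ 2 * f'' x / 16 ≤ -f x := by
  have hl := add_deriv_mul_sub_add_sq_le_of_antitoneOn hf hf' hanti (by positivity : 0 < x / 2) hx
  have hr :=
    add_deriv_mul_sub_add_sq_le_of_antitoneOn hf hf' hanti (by positivity : 0 < 3 * x / 2) hx
  rw [max_eq_right (by linarith)] at hl
  rw [max_eq_left (by linarith)] at hr
  nlinarith [mul_nonneg (hf''₀ (3 * x / 2) (by positivity)) (sq_nonneg x)]

theorem sq_mul_deriv2_div_eight_le
    (hf : ∀ x, 0 < x → HasDerivAt f (f' x) x) (hf' : ∀ x, 0 < x → HasDerivAt f' (f'' x) x)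
    (hanti : AntitoneOn f'' (Ioi 0)) {x : ℝ} (hx : 0 < x)
    (hval : 0 ≤ f (x / 2)) (hderiv : 0 ≤ f' (x / 2)) :
    x ^ 2 * f'' x / 8 ≤ f x := by
  have h := add_deriv_mul_sub_add_sq_le_of_antitoneOn hf hf' hanti hx (by positivity : 0 < x / 2)
  rw [max_eq_left (by linarith)] at h
  nlinarith [mul_nonneg hderiv hx.le]

theorem sq_mul_deriv2_div_sixteen_le_abs
    (hf : ∀ x, 0 < x → HasDerivAt f (f' x) x) (hf' : ∀ x, 0 < x → HasDerivAt f' (f'' x) x)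
    (hanti : AntitoneOn f'' (Ioi 0)) (hf''₀ : ∀ x, 0 < x → 0 ≤ f'' x)
    (htan : ∀ t, 0 < t → f t ≤ t * f' t) {θ : ℝ} (hθ : 0 ≤ θ) (hroot : f θ = 0)
    (hno_root : ∀ t, θ < t → f t ≠ 0) {x : ℝ} (hx : (0 < x ∧ x < θ / 2) ∨ 2 * θ < x) :
    x ^ 2 * f'' x / 16 ≤ |f x| := by
  have hconv := convexOn_Ioi_of_deriv2_nonneg hf hf' hf''₀
  have hbelow : ∀ t, 0 < t → t < θ → f t ≤ 0 := fun t ht htθ =>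
    hconv.nonpos_of_lt_of_eq_zero (hf t ht) (htan t ht) ht htθ hroot
  have habove : (∀ t ∈ Ioi θ, 0 < f t) ∨ (∀ t ∈ Ioi θ, f t < 0) :=
    isPreconnected_Ioi.forall_pos_or_forall_neg
      (fun t ht => (hf t (hθ.trans_lt ht)).continuousAt.continuousWithinAt) hno_root
  rcases hx with ⟨hx0, hx⟩ | hx
  · have h := sq_mul_deriv2_div_sixteen_le_neg hf hf' hanti hf''₀ hx0
      (hbelow _ (by positivity) (by linarith)) (hbelow _ (by positivity) (by linarith))
    linarith [neg_le_abs (f x)]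
  have hx0 : 0 < x := by linarith
  rcases habove with hpos | hneg
  · have hval := hpos (x / 2) (by rw [mem_Ioi]; linarith)
    have hderiv : 0 ≤ f' (x / 2) := by nlinarith [htan (x / 2) (by positivity)]
    have h := sq_mul_deriv2_div_eight_le hf hf' hanti hx0 hval.le hderiv
    nlinarith [mul_nonneg (sq_nonneg x) (hf''₀ x hx0), le_abs_self (f x)]
  · have h := sq_mul_deriv2_div_sixteen_le_neg hf hf' hanti hf''₀ hx0
      (hneg _ (by rw [mem_Ioi]; linarith)).le (hneg _ (by rw [mem_Ioi]; linarith)).le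
    linarith [neg_le_abs (f x)]

end DerivativesOnIoi

theorem integral_le_integral_of_le_of_nonneg {α : Type*} [MeasurableSpace α] {μ : Measure α}
    {f g : α → ℝ} (hg : Integrable g μ) (hg₀ : 0 ≤ᵐ[μ] g) (hfg : f ≤ᵐ[μ] g) :
    ∫ a, f a ∂μ ≤ ∫ a, g a ∂μ := by
  by_cases hf : Integrable f μ
  · exact integral_mono_ae hf hg hfg
  · rw [integral_undef hf]
    exact integral_nonneg_of_ae hg₀

theorem sq_mul_exp_neg_mul_le {l x : ℝ} (hl : 0 < l) (hx : 0 ≤ x) :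
    x ^ 2 * exp (-(l * x)) ≤ 2 / l ^ 2 := by
  have h := pow_div_factorial_le_exp (l * x) (mul_nonneg hl.le hx) 2
  rw [exp_neg, ← div_eq_mul_inv, div_le_div_iff₀ (exp_pos _) (by positivity)]
  norm_num [Nat.factorial] at h
  nlinarith

section LevyMeasure

variable {ν : Measure ℝ}

theorem integrableOn_min_one_sq_of_lintegral_ne_top
    (hint : ∫⁻ x in Ioi (0:ℝ), ENNReal.ofReal (min 1 (x ^ 2)) ∂ν ≠ ⊤) :
    IntegrableOn (fun x : ℝ => min 1 (x ^ 2)) (Ioi 0) ν := by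
  refine ⟨by fun_prop, ?_⟩
  rw [hasFiniteIntegral_iff_ofReal (ae_of_all _ fun x => by positivity)]
  exact hint.lt_top

theorem integrableOn_sq_mul_exp_neg_mul (hν : IntegrableOn (fun x : ℝ => min 1 (x ^ 2)) (Ioi 0) ν)
    {l : ℝ} (hl : 0 < l) : IntegrableOn (fun x => x ^ 2 * exp (-(l * x))) (Ioi 0) ν := by
  refine Integrable.mono' (hν.const_mul (1 + 2 / l ^ 2)) (by fun_prop)
    (ae_restrict_of_forall_mem measurableSet_Ioi fun x (hx : 0 < x) => ?_)
  have hexp : exp (-(l * x)) ≤ 1 := exp_le_one_iff.2 (by nlinarith)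
  rw [norm_of_nonneg (by positivity)]
  rcases le_total x 1 with hx1 | hx1
  · rw [min_eq_right (by nlinarith)]
    nlinarith [sq_nonneg x, div_nonneg zero_le_two (sq_nonneg l)]
  · rw [min_eq_left (by nlinarith), mul_one]
    linarith [sq_mul_exp_neg_mul_le hl hx.le]

theorem antitoneOn_integral_sq_mul_exp_neg_mul
    (hν : IntegrableOn (fun x : ℝ => min 1 (x ^ 2)) (Ioi 0) ν) :
    AntitoneOn (fun l => ∫ x in Ioi (0:ℝ), x ^ 2 * exp (-(l * x)) ∂ν) (Ioi 0) := by
  intro a ha c _ hac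
  refine integral_mono_of_nonneg (ae_of_all _ fun x => by positivity)
    (integrableOn_sq_mul_exp_neg_mul hν ha)
    (ae_restrict_of_forall_mem measurableSet_Ioi fun x (hx : 0 < x) => ?_)
  dsimp only
  gcongr

theorem integral_exp_neg_mul_sub_one_add_le
    (hν : IntegrableOn (fun x : ℝ => min 1 (x ^ 2)) (Ioi 0) ν) {s : ℝ} (hs₀ : 0 ≤ s)
    (hs₁ : s ≤ 1) :
    ∫ x in Ioi (0:ℝ), (exp (-(s * x)) - 1 + s * x * (if x < 1 then 1 else 0)) ∂ν ≤
      s ^ 2 * ∫ x in Ioi (0:ℝ), min 1 (x ^ 2) ∂ν := by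
  rw [← integral_const_mul]
  refine integral_le_integral_of_le_of_nonneg (hν.const_mul _)
    (ae_of_all _ fun x => by positivity)
    (ae_restrict_of_forall_mem measurableSet_Ioi fun x (hx : 0 < x) => ?_)
  dsimp only
  rcases lt_or_ge x 1 with hx1 | hx1
  · have hsx : |-(s * x)| ≤ 1 := by
      rw [abs_neg, abs_of_nonneg (by positivity)]
      nlinarith
    have h := (abs_le.1 (abs_exp_sub_one_sub_id_le hsx)).2
    rw [if_pos hx1, min_eq_right (by nlinarith)]
    linarith
  · have hexp : exp (-(s * x)) ≤ 1 := exp_le_one_iff.2 (by nlinarith)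
    rw [if_neg (not_lt.2 hx1)]
    nlinarith [sq_nonneg s, le_min zero_le_one (sq_nonneg x)]

end LevyMeasure

theorem statement2_general
    (ν : Measure ℝ)
    (hint : ∫⁻ x in Ioi (0:ℝ), ENNReal.ofReal (min 1 (x ^ 2)) ∂ν ≠ ⊤)
    (σ b : ℝ)
    (φ φ' φ'' : ℝ → ℝ)
    (hφ : ∀ l : ℝ, 0 ≤ l → φ l = σ ^ 2 * l ^ 2 - b * l +
      ∫ x in Ioi (0:ℝ), (Real.exp (-(l * x)) - 1 + l * x * (if x < 1 then 1 else 0)) ∂ν)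
    (hD1 : ∀ x : ℝ, 0 < x → HasDerivAt φ (φ' x) x)
    (hD2 : ∀ x : ℝ, 0 < x → HasDerivAt φ' (φ'' x) x)
    (hφ'' : ∀ l : ℝ, 0 < l → φ'' l = 2 * σ ^ 2 + ∫ x in Ioi (0:ℝ), x ^ 2 * Real.exp (-(l * x)) ∂ν)
    (θ₀ : ℝ)
    (hθ₀ : IsGreatest {s : ℝ | 0 ≤ s ∧ φ s = 0} θ₀)
    :
    ∃ c : ℝ, 0 < c ∧ ∀ x : ℝ, ((0 < x ∧ x < θ₀ / 2) ∨ 2 * θ₀ < x) →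
      c * (x ^ 2 * φ'' x) ≤ |φ x| := by
  have hν := integrableOn_min_one_sq_of_lintegral_ne_top hint
  have hφ''₀ : ∀ l, 0 < l → 0 ≤ φ'' l := fun l hl => by
    rw [hφ'' l hl]
    exact add_nonneg (by positivity) (integral_nonneg fun x => by positivity)
  have hanti : AntitoneOn φ'' (Ioi 0) := fun a ha c hc hac => by
    rw [hφ'' a ha, hφ'' c hc]
    exact add_le_add_right (antitoneOn_integral_sq_mul_exp_neg_mul hν ha hc hac) _
  have hconv := convexOn_Ioi_of_deriv2_nonneg hD1 hD2 hφ''₀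
  set M := ∫ x in Ioi (0:ℝ), min 1 (x ^ 2) ∂ν
  have htan : ∀ t, 0 < t → φ t ≤ t * φ' t := by
    refine fun t ht => hconv.le_mul_of_hasDerivAt_of_le_tendsto
      (g := fun s => σ ^ 2 * s ^ 2 - b * s + s ^ 2 * M) ?_ ?_ ht (hD1 t ht)
    · exact ((by fun_prop : Continuous fun s : ℝ => σ ^ 2 * s ^ 2 - b * s + s ^ 2 * M).tendsto'
        0 0 (by simp)).mono_left nhdsWithin_le_nhds
    · filter_upwards [Ioo_mem_nhdsGT zero_lt_one] with s hs
      rw [hφ s hs.1.le]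
      linarith [integral_exp_neg_mul_sub_one_add_le hν hs.1.le hs.2.le]
  refine ⟨1 / 16, by norm_num, fun x hx => ?_⟩
  have h := sq_mul_deriv2_div_sixteen_le_abs hD1 hD2 hanti hφ''₀ htan hθ₀.1.1 hθ₀.1.2
    (fun t ht h0 => (hθ₀.2 ⟨hθ₀.1.1.trans ht.le, h0⟩).not_gt ht) hx
  linarith

/-- Corollary 3. -/
theorem statement2
    (ν : Measure ℝ) [SigmaFinite ν]
    (hint : ∫⁻ x in Ioi (0:ℝ), ENNReal.ofReal (min 1 (x ^ 2)) ∂ν ≠ ⊤)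
    (σ b : ℝ) (hσ : 0 ≤ σ)
    (φ φ' φ'' : ℝ → ℝ)
    (hφ : ∀ l : ℝ, 0 ≤ l → φ l = σ ^ 2 * l ^ 2 - b * l +
      ∫ x in Ioi (0:ℝ), (Real.exp (-(l * x)) - 1 + l * x * (if x < 1 then 1 else 0)) ∂ν)
    (hD1 : ∀ x : ℝ, 0 < x → HasDerivAt φ (φ' x) x)
    (hD2 : ∀ x : ℝ, 0 < x → HasDerivAt φ' (φ'' x) x)
    (hφ'' : ∀ l : ℝ, 0 < l → φ'' l = 2 * σ ^ 2 + ∫ x in Ioi (0:ℝ), x ^ 2 * Real.exp (-(l * x)) ∂ν)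
    (hUV : 0 < σ ∨ ∫⁻ x in Ioo (0:ℝ) 1, ENNReal.ofReal x ∂ν = ⊤)
    (θ₀ θ₁ : ℝ)
    (hθ₀ : IsGreatest {s : ℝ | 0 ≤ s ∧ φ s = 0} θ₀)
    (hθ₁ : θ₁ = sInf {s : ℝ | 0 < s ∧ 0 < φ' s})
    :
    ∃ c : ℝ, 0 < c ∧ ∀ x : ℝ, ((0 < x ∧ x < θ₀ / 2) ∨ 2 * θ₀ < x) →
      c * (x ^ 2 * φ'' x) ≤ |φ x| :=
  statement2_general ν hint σ b φ φ' φ'' hφ hD1 hD2 hφ'' θ₀ hθ₀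
end
end

section
/- (Corollary 4) Suppose φ'' ∈ WLSC(α−2, c, x₀) for some c ∈ (0,1], x₀ ≥ 0 and α > 0. Then there is a constant c₁ ∈ (0,1] such that for all x > x₀, c₁ x² φ''(x) ≤ K(1/x) ≤ e x² φ''(x), where the upper bound K(1/x) ≤ e x² φ''(x) holds for all x > 0 without the scaling assumption. -/
open MeasureTheory Real Set Filter

noncomputable section

/-! Write `J(t) = ∫ s² e^{-ts} ν(ds)`, so that `φ''(t) = 2σ² + J(t)` and
`K(1/x) = x² (σ² + ∫_{(0,1/x)} s² ν(ds))`. The upper bound is the pointwise estimate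
`s² ≤ e · s² e^{-xs}` for `s < 1/x`. For the lower bound split `J` at `1/x`: the head is at most
`∫_{(0,1/x)} s² ν(ds)`, and since `e^{-Lxs} ≤ e^{1-L} e^{-xs}` for `xs ≥ 1`, the tail at `Lx` is at
most `e^{1-L}` times the tail at `x`. Choosing `L` with `e^{1-L} ≤ c L^{α-2} / 2`, the scaling
inequality `φ''(Lx) ≥ c L^{α-2} φ''(x)` absorbs the tail and bounds it by a multiple of `x⁻² K(1/x)`.
-/

def laplaceExpSecondDeriv (σ : ℝ) (ν : Measure ℝ) (t : ℝ) : ℝ :=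
  2 * σ ^ 2 + ∫ s in Ioi (0:ℝ), s ^ 2 * exp (-(t * s)) ∂ν

lemma pruittK_inv (σ : ℝ) (ν : Measure ℝ) (x : ℝ) :
    pruittK σ ν x⁻¹ = x ^ 2 * (σ ^ 2 + ∫ s in Ioo (0:ℝ) x⁻¹, s ^ 2 ∂ν) := by
  rw [pruittK, inv_pow, div_inv_eq_mul, div_inv_eq_mul]
  ring

section

variable {ν : Measure ℝ}

lemma sq_mul_exp_neg_le {t s : ℝ} (ht : 0 < t) (hs : 0 ≤ s) :
    s ^ 2 * exp (-(t * s)) ≤ max 1 (2 / t ^ 2) * min 1 (s ^ 2) := by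
  have hexp : exp (-(t * s)) * exp (t * s) = 1 := by rw [← exp_add]; simp
  have h_small : s ^ 2 * exp (-(t * s)) ≤ s ^ 2 :=
    mul_le_of_le_one_right (sq_nonneg s) (exp_le_one_iff.2 (by nlinarith))
  have h_large : s ^ 2 * exp (-(t * s)) ≤ 2 / t ^ 2 := by
    have := pow_div_factorial_le_exp (x := t * s) (mul_nonneg ht.le hs) 2
    rw [le_div_iff₀ (by positivity)]
    norm_num [Nat.factorial] at this
    nlinarith [exp_pos (-(t * s))]
  rw [mul_min_of_nonneg _ _ (by positivity), mul_one]
  exact le_min (h_large.trans (le_max_right _ _))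
    (h_small.trans (le_mul_of_one_le_left (sq_nonneg s) (le_max_left _ _)))

lemma integrableOn_sq_mul_exp_neg_s7
    (hint : ∫⁻ x in Ioi (0:ℝ), ENNReal.ofReal (min 1 (x ^ 2)) ∂ν ≠ ⊤) {t : ℝ} (ht : 0 < t) :
    IntegrableOn (fun s ↦ s ^ 2 * exp (-(t * s))) (Ioi 0) ν := by
  have hmin : IntegrableOn (fun s : ℝ ↦ min 1 (s ^ 2)) (Ioi 0) ν := by
    refine ⟨by fun_prop, ?_⟩
    simpa only [HasFiniteIntegral, Real.enorm_eq_ofReal (le_min zero_le_one (sq_nonneg _))]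
      using hint.lt_top
  refine (hmin.const_mul (max 1 (2 / t ^ 2))).mono' (by fun_prop) ?_
  filter_upwards [ae_restrict_mem measurableSet_Ioi] with s hs
  rw [norm_of_nonneg (by positivity)]
  exact sq_mul_exp_neg_le ht (le_of_lt hs)

lemma integral_Ioi_eq_integral_Ioo_add_integral_Ici {f : ℝ → ℝ} {a r : ℝ} (har : a < r)
    (hf : IntegrableOn f (Ioi a) ν) :
    ∫ s in Ioi a, f s ∂ν = (∫ s in Ioo a r, f s ∂ν) + ∫ s in Ici r, f s ∂ν := by
  rw [← Ioo_union_Ici_eq_Ioi har]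
  exact setIntegral_union (Set.disjoint_left.2 fun _ h h' ↦ not_le.2 h.2 h') measurableSet_Ici
    (hf.mono_set Ioo_subset_Ioi_self) (hf.mono_set (Ici_subset_Ioi.2 har))


lemma sq_le_exp_one_mul_sq_mul_exp_neg {x s : ℝ} (hx : 0 < x) (hs : s ≤ x⁻¹) :
    s ^ 2 ≤ exp 1 * (s ^ 2 * exp (-(x * s))) := by
  have hxs : x * s ≤ 1 := by simpa [hx.ne'] using mul_le_mul_of_nonneg_left hs hx.le
  rw [mul_left_comm, ← exp_add]
  exact le_mul_of_one_le_right (sq_nonneg s) (one_le_exp (by linarith))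

variable {x : ℝ}

lemma integrableOn_sq_Ioo_inv (hx : 0 < x)
    (hJ : IntegrableOn (fun s ↦ s ^ 2 * exp (-(x * s))) (Ioi 0) ν) :
    IntegrableOn (fun s ↦ s ^ 2) (Ioo 0 x⁻¹) ν := by
  refine ((hJ.mono_set Ioo_subset_Ioi_self).const_mul (exp 1)).mono' (by fun_prop) ?_
  filter_upwards [ae_restrict_mem measurableSet_Ioo] with s hs
  rw [norm_of_nonneg (sq_nonneg s)]
  exact sq_le_exp_one_mul_sq_mul_exp_neg hx hs.2.le

lemma setIntegral_Ioo_inv_sq_le (hx : 0 < x)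
    (hJ : IntegrableOn (fun s ↦ s ^ 2 * exp (-(x * s))) (Ioi 0) ν) :
    ∫ s in Ioo 0 x⁻¹, s ^ 2 ∂ν ≤ exp 1 * ∫ s in Ioi 0, s ^ 2 * exp (-(x * s)) ∂ν := by
  calc ∫ s in Ioo 0 x⁻¹, s ^ 2 ∂ν
      ≤ ∫ s in Ioo 0 x⁻¹, exp 1 * (s ^ 2 * exp (-(x * s))) ∂ν :=
        setIntegral_mono_on (integrableOn_sq_Ioo_inv hx hJ)
          ((hJ.mono_set Ioo_subset_Ioi_self).const_mul _) measurableSet_Ioo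
          fun s hs ↦ sq_le_exp_one_mul_sq_mul_exp_neg hx hs.2.le
    _ = exp 1 * ∫ s in Ioo 0 x⁻¹, s ^ 2 * exp (-(x * s)) ∂ν := integral_const_mul _ _
    _ ≤ exp 1 * ∫ s in Ioi 0, s ^ 2 * exp (-(x * s)) ∂ν :=
        mul_le_mul_of_nonneg_left (setIntegral_mono_set hJ (ae_of_all _ fun s ↦ by positivity)
          Ioo_subset_Ioi_self.eventuallyLE) (exp_pos 1).le

lemma pruittK_inv_le_exp_one_mul (σ : ℝ) (hx : 0 < x)
    (hJ : IntegrableOn (fun s ↦ s ^ 2 * exp (-(x * s))) (Ioi 0) ν) :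
    pruittK σ ν x⁻¹ ≤ exp 1 * (x ^ 2 * laplaceExpSecondDeriv σ ν x) := by
  have h_int := setIntegral_Ioo_inv_sq_le hx hJ
  have h_exp : 1 ≤ exp 1 := one_le_exp zero_le_one
  rw [pruittK_inv, laplaceExpSecondDeriv, mul_left_comm]
  gcongr
  nlinarith [sq_nonneg σ]

lemma setIntegral_Ioo_sq_mul_exp_neg_le {t r : ℝ} (ht : 0 ≤ t)
    (hA : IntegrableOn (fun s ↦ s ^ 2) (Ioo 0 r) ν) :
    ∫ s in Ioo 0 r, s ^ 2 * exp (-(t * s)) ∂ν ≤ ∫ s in Ioo 0 r, s ^ 2 ∂ν := by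
  refine integral_mono_of_nonneg (ae_of_all _ fun s ↦ by positivity) hA ?_
  filter_upwards [ae_restrict_mem measurableSet_Ioo] with s hs
  exact mul_le_of_le_one_right (sq_nonneg s) (exp_le_one_iff.2 (by nlinarith [hs.1]))

lemma setIntegral_Ici_inv_sq_mul_exp_neg_mul_le {L : ℝ} (hx : 0 < x) (hL : 1 ≤ L)
    (hJ : IntegrableOn (fun s ↦ s ^ 2 * exp (-(x * s))) (Ioi 0) ν) :
    ∫ s in Ici x⁻¹, s ^ 2 * exp (-(L * x * s)) ∂ν ≤
      exp (1 - L) * ∫ s in Ici x⁻¹, s ^ 2 * exp (-(x * s)) ∂ν := by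
  rw [← integral_const_mul]
  refine integral_mono_of_nonneg (ae_of_all _ fun s ↦ by positivity)
    ((hJ.mono_set (Ici_subset_Ioi.2 (inv_pos.2 hx))).const_mul _) ?_
  filter_upwards [ae_restrict_mem measurableSet_Ici] with s hs
  have hxs : 1 ≤ x * s := (inv_le_iff_one_le_mul₀' hx).1 hs
  rw [mul_left_comm, ← exp_add]
  -- `(L - 1)(xs - 1) ≥ 0`
  gcongr
  nlinarith

lemma exists_one_le_exp_one_sub_le {c : ℝ} (hc : 0 < c) (τ : ℝ) :
    ∃ L, 1 ≤ L ∧ exp (1 - L) ≤ c * L ^ τ / 2 := by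
  have h_lim := tendsto_rpow_mul_exp_neg_mul_atTop_nhds_zero (-τ) 1 one_pos
  obtain ⟨L, hL_small, hL⟩ := ((h_lim.eventually (gt_mem_nhds (by positivity :
    0 < c / (2 * exp 1)))).and (eventually_ge_atTop 1)).exists
  refine ⟨L, hL, ?_⟩
  have hL0 : 0 < L := one_pos.trans_le hL
  rw [rpow_neg hL0.le, neg_one_mul, inv_mul_lt_iff₀ (rpow_pos_of_pos hL0 τ)] at hL_small
  calc exp (1 - L) = exp 1 * exp (-L) := by rw [sub_eq_add_neg, exp_add]
    _ ≤ exp 1 * (L ^ τ * (c / (2 * exp 1))) := by gcongr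
    _ = c * L ^ τ / 2 := by field_simp

lemma sq_mul_laplaceExpSecondDeriv_le_mul_pruittK_inv {σ L β : ℝ} (hx : 0 < x) (hL : 1 ≤ L)
    (hβ : 0 < β) (hLβ : exp (1 - L) ≤ β / 2)
    (hJ : ∀ t, 0 < t → IntegrableOn (fun s ↦ s ^ 2 * exp (-(t * s))) (Ioi 0) ν)
    (hscal : β * laplaceExpSecondDeriv σ ν x ≤ laplaceExpSecondDeriv σ ν (L * x)) :
    x ^ 2 * laplaceExpSecondDeriv σ ν x ≤ 2 * (1 + 2 / β) * pruittK σ ν x⁻¹ := by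
  have hr : (0 : ℝ) < x⁻¹ := inv_pos.2 hx
  have hLx : 0 < L * x := by positivity
  have hA := integrableOn_sq_Ioo_inv hx (hJ x hx)
  set A := ∫ s in Ioo 0 x⁻¹, s ^ 2 ∂ν
  set T := ∫ s in Ici x⁻¹, s ^ 2 * exp (-(x * s)) ∂ν
  have hA_nonneg : 0 ≤ A := setIntegral_nonneg measurableSet_Ioo fun s _ ↦ sq_nonneg s
  have hT_nonneg : 0 ≤ T := setIntegral_nonneg measurableSet_Ici fun s _ ↦ by positivity
  have h_head_x := setIntegral_Ioo_sq_mul_exp_neg_le hx.le hA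
  have h_head_L := setIntegral_Ioo_sq_mul_exp_neg_le hLx.le hA
  have h_tail_L := setIntegral_Ici_inv_sq_mul_exp_neg_mul_le hx hL (hJ x hx)
  have h_head_nonneg : 0 ≤ ∫ s in Ioo 0 x⁻¹, s ^ 2 * exp (-(x * s)) ∂ν :=
    setIntegral_nonneg measurableSet_Ioo fun s _ ↦ by positivity
  rw [laplaceExpSecondDeriv, laplaceExpSecondDeriv,
    integral_Ioi_eq_integral_Ioo_add_integral_Ici hr (hJ x hx),
    integral_Ioi_eq_integral_Ioo_add_integral_Ici hr (hJ _ hLx)] at hscal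
  -- the scaling inequality, with the tail at `L x` absorbed, controls the tail at `x`
  have h_tail : T ≤ 2 / β * (2 * σ ^ 2 + A) := by
    rw [div_mul_eq_mul_div, le_div_iff₀ hβ]
    nlinarith [mul_le_mul_of_nonneg_right hLβ hT_nonneg, sq_nonneg σ]
  rw [pruittK_inv, laplaceExpSecondDeriv,
    integral_Ioi_eq_integral_Ioo_add_integral_Ici hr (hJ x hx), mul_left_comm]
  gcongr
  nlinarith [sq_nonneg σ, mul_nonneg (div_pos two_pos hβ).le hA_nonneg]

end

theorem statement7_general
    (ν : Measure ℝ)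
    (hint : ∫⁻ x in Ioi (0:ℝ), ENNReal.ofReal (min 1 (x ^ 2)) ∂ν ≠ ⊤)
    (σ : ℝ)
    (φ'' : ℝ → ℝ)
    (hφ'' : ∀ l : ℝ, 0 < l → φ'' l = 2 * σ ^ 2 + ∫ x in Ioi (0:ℝ), x ^ 2 * Real.exp (-(l * x)) ∂ν)
    (α c x₀ : ℝ) (hc : c ∈ Ioc (0:ℝ) 1) (hx₀ : 0 ≤ x₀)
    (hscal : WLSC φ'' (α - 2) c x₀) :
    (∃ c₁ : ℝ, c₁ ∈ Ioc (0:ℝ) 1 ∧ ∀ x : ℝ, x₀ < x →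
      c₁ * (x ^ 2 * φ'' x) ≤ pruittK σ ν x⁻¹) ∧
    (∀ x : ℝ, 0 < x → pruittK σ ν x⁻¹ ≤ Real.exp 1 * (x ^ 2 * φ'' x)) := by
  have hJ t (ht : 0 < t) := integrableOn_sq_mul_exp_neg_s7 hint ht
  refine ⟨?_, fun x hx ↦ hφ'' x hx ▸ pruittK_inv_le_exp_one_mul σ hx (hJ x hx)⟩
  obtain ⟨L, hL, hLβ⟩ := exists_one_le_exp_one_sub_le hc.1 (α - 2)
  set β := c * L ^ (α - 2)
  have hβ : 0 < β := mul_pos hc.1 (rpow_pos_of_pos (one_pos.trans_le hL) _)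
  refine ⟨(2 * (1 + 2 / β))⁻¹, ⟨by positivity, inv_le_one_of_one_le₀ ?_⟩, fun x hx ↦ ?_⟩
  · linarith [div_pos two_pos hβ]
  have hx0 : 0 < x := hx₀.trans_lt hx
  have hscal_x := hscal L hL x hx
  rw [hφ'' x hx0, hφ'' (L * x) (by positivity)] at hscal_x
  rw [hφ'' x hx0, inv_mul_le_iff₀ (by positivity)]
  exact sq_mul_laplaceExpSecondDeriv_le_mul_pruittK_inv hx0 hL hβ hLβ hJ hscal_x

/-- Corollary 4. -/
theorem statement7
    (ν : Measure ℝ) [SigmaFinite ν]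
    (hint : ∫⁻ x in Ioi (0:ℝ), ENNReal.ofReal (min 1 (x ^ 2)) ∂ν ≠ ⊤)
    (σ b : ℝ) (hσ : 0 ≤ σ)
    (φ φ' φ'' : ℝ → ℝ)
    (hφ : ∀ l : ℝ, 0 ≤ l → φ l = σ ^ 2 * l ^ 2 - b * l +
      ∫ x in Ioi (0:ℝ), (Real.exp (-(l * x)) - 1 + l * x * (if x < 1 then 1 else 0)) ∂ν)
    (hD1 : ∀ x : ℝ, 0 < x → HasDerivAt φ (φ' x) x)
    (hD2 : ∀ x : ℝ, 0 < x → HasDerivAt φ' (φ'' x) x)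
    (hφ'' : ∀ l : ℝ, 0 < l → φ'' l = 2 * σ ^ 2 + ∫ x in Ioi (0:ℝ), x ^ 2 * Real.exp (-(l * x)) ∂ν)
    (α c x₀ : ℝ) (hα : 0 < α) (hc : c ∈ Ioc (0:ℝ) 1) (hx₀ : 0 ≤ x₀)
    (hscal : WLSC φ'' (α - 2) c x₀) :
    (∃ c₁ : ℝ, c₁ ∈ Ioc (0:ℝ) 1 ∧ ∀ x : ℝ, x₀ < x →
      c₁ * (x ^ 2 * φ'' x) ≤ pruittK σ ν x⁻¹) ∧
    (∀ x : ℝ, 0 < x → pruittK σ ν x⁻¹ ≤ Real.exp 1 * (x ^ 2 * φ'' x)) :=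
  statement7_general ν hint σ φ'' hφ'' α c x₀ hc hx₀ hscal

end
end
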